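/- Let 1 < p < ∞, R > 0, Q = m + 2k, and define f(z,σ) = ((p−1)/(2p(Q+p)^{1/(p−1)})) · ( R^{2p/(p−1)} − N(z,σ)^{2p/(p−1)} ) on ℝ^m × ℝ^k, where N(z,σ) = (|z|⁴ + 16|σ|²)^{1/4}. Then: (i) at every point (z,σ) with z ≠ 0 one has Δ_{H,p} f(z,σ) = −|z|^p; (ii) f(z,σ) = 0 whenever N(z,σ) = R and f(z,σ) > 0 whenever N(z,σ) < R; (iii) at every point with N(z,σ) = R one has |∇_H f(z,σ)| = c|z| with c = (R²/(Q+p))^{1/(p−1)}. -/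

import Mathlib

open scoped BigOperators
open Matrix

noncomputable section

variable {m k : ℕ}

abbrev Pt (m k : ℕ) := EuclideanSpace ℝ (Fin m) × EuclideanSpace ℝ (Fin k)

def HType (J : Fin k → Matrix (Fin m) (Fin m) ℝ) : Prop :=
  (∀ ℓ, (J ℓ)ᵀ = -(J ℓ)) ∧
  ∀ ℓ ℓ', J ℓ * J ℓ' + J ℓ' * J ℓ =
    (if ℓ = ℓ' then (-2 : ℝ) else 0) • (1 : Matrix (Fin m) (Fin m) ℝ)

/-- `X_i f(z,σ) = ∂_{z_i} f + (1/2) Σ_ℓ (J_ℓ z)_i ∂_{σ_ℓ} f`. -/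
def XD (J : Fin k → Matrix (Fin m) (Fin m) ℝ) (f : Pt m k → ℝ) (i : Fin m) (x : Pt m k) : ℝ :=
  fderiv ℝ f x (EuclideanSpace.single i 1, 0)
    + (1/2) * ∑ ℓ : Fin k, (∑ j : Fin m, J ℓ i j * x.1 j) *
        fderiv ℝ f x (0, EuclideanSpace.single ℓ 1)

/-- `|∇_H f|²`. -/
def hGradSq (J : Fin k → Matrix (Fin m) (Fin m) ℝ) (f : Pt m k → ℝ) (x : Pt m k) : ℝ :=
  ∑ i : Fin m, (XD J f i x) ^ 2

/-- `|∇_H f|`. -/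
def hGradNorm (J : Fin k → Matrix (Fin m) (Fin m) ℝ) (f : Pt m k → ℝ) (x : Pt m k) : ℝ :=
  Real.sqrt (hGradSq J f x)

/-- `Δ_H f`. -/
def hLap (J : Fin k → Matrix (Fin m) (Fin m) ℝ) (f : Pt m k → ℝ) (x : Pt m k) : ℝ :=
  ∑ i : Fin m, XD J (XD J f i) i x

/-- `Δ_{H,∞} f`. -/
def hInfLap (J : Fin k → Matrix (Fin m) (Fin m) ℝ) (f : Pt m k → ℝ) (x : Pt m k) : ℝ :=
  (1/2) * ∑ i : Fin m, XD J (hGradSq J f) i x * XD J f i x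

/-- `Δ_{H,p} f`. -/
def hPLap (J : Fin k → Matrix (Fin m) (Fin m) ℝ) (p : ℝ) (f : Pt m k → ℝ) (x : Pt m k) : ℝ :=
  ∑ i : Fin m, XD J (fun y => (hGradSq J f y) ^ ((p - 2) / 2) * XD J f i y) i x

/-- The Korányi gauge `N`. -/
def gaugeN (x : Pt m k) : ℝ := (‖x.1‖ ^ 4 + 16 * ‖x.2‖ ^ 2) ^ ((1 : ℝ)/4)

/-- `∂_ξ g` for `g : ℝ × ℝ^k → ℝ`. -/
def gXi (g : ℝ × EuclideanSpace ℝ (Fin k) → ℝ) (y : ℝ × EuclideanSpace ℝ (Fin k)) : ℝ :=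
  fderiv ℝ g y (1, 0)

/-- `∂_{σ_ℓ} g`. -/
def gS (g : ℝ × EuclideanSpace ℝ (Fin k) → ℝ) (ℓ : Fin k) (y : ℝ × EuclideanSpace ℝ (Fin k)) : ℝ :=
  fderiv ℝ g y (0, EuclideanSpace.single ℓ 1)

/-- `|∇ g|²`. -/
def gGradSq (g : ℝ × EuclideanSpace ℝ (Fin k) → ℝ) (y : ℝ × EuclideanSpace ℝ (Fin k)) : ℝ :=
  (gXi g y) ^ 2 + ∑ ℓ : Fin k, (gS g ℓ y) ^ 2

/-- `g_{ξξ}`. -/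
def gXiXi (g : ℝ × EuclideanSpace ℝ (Fin k) → ℝ) (y : ℝ × EuclideanSpace ℝ (Fin k)) : ℝ :=
  fderiv ℝ (gXi g) y (1, 0)

/-- `Δ_σ g`. -/
def gLapS (g : ℝ × EuclideanSpace ℝ (Fin k) → ℝ) (y : ℝ × EuclideanSpace ℝ (Fin k)) : ℝ :=
  ∑ ℓ : Fin k, fderiv ℝ (gS g ℓ) y (0, EuclideanSpace.single ℓ 1)

/-- `Δ_∞ g`. -/
def gInf (g : ℝ × EuclideanSpace ℝ (Fin k) → ℝ) (y : ℝ × EuclideanSpace ℝ (Fin k)) : ℝ :=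
  (1/2) * (fderiv ℝ (gGradSq g) y (1, 0) * gXi g y
    + ∑ ℓ : Fin k, fderiv ℝ (gGradSq g) y (0, EuclideanSpace.single ℓ 1) * gS g ℓ y)

/-!
The solution is radial for the gauge, `f = c - C N^β` with `β = 2p/(p-1)`. The horizontal
gradient of the gauge is `∇_H N = w / N³` with `w = |z|² z + 4 J_σ z`, and the Clifford relations
give `|w|² = |z|² N⁴`, so `|∇_H f| = Cβ N^{β-2} |z|`. For this `β` the powers of `N` cancel in
the flux, `|∇_H f|^{p-2} ∇_H f = -(Cβ)^{p-1} |z|^{p-2} w`, whose horizontal divergence is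
`(Q + p) |z|^p` because `Σ_i X_i w_i = (Q + 2) |z|²` and `⟨z, w⟩ = |z|⁴`.
-/

open Filter Topology

section SkewMatrix

variable {n : Type*} [Fintype n] {A : Matrix n n ℝ}

theorem dotProduct_mulVec_self_eq_zero_of_transpose_eq_neg (hA : Aᵀ = -A) (z : n → ℝ) :
    z ⬝ᵥ (A *ᵥ z) = 0 := by
  have h : z ⬝ᵥ (A *ᵥ z) = -(z ⬝ᵥ (A *ᵥ z)) := by
    calc z ⬝ᵥ (A *ᵥ z) = (Aᵀ *ᵥ z) ⬝ᵥ z := by rw [dotProduct_mulVec, mulVec_transpose]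
      _ = -(z ⬝ᵥ (A *ᵥ z)) := by rw [hA, neg_mulVec, neg_dotProduct, dotProduct_comm]
  linarith

theorem trace_eq_zero_of_transpose_eq_neg (hA : Aᵀ = -A) : A.trace = 0 := by
  have h := trace_transpose A
  rw [hA, trace_neg] at h
  linarith

end SkewMatrix

namespace HType

variable {J : Fin k → Matrix (Fin m) (Fin m) ℝ}

theorem mulVec_dotProduct_mulVec (hJ : HType J) (a b : Fin k) (z : Fin m → ℝ) :
    (J a *ᵥ z) ⬝ᵥ (J b *ᵥ z) = if a = b then z ⬝ᵥ z else 0 := by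
  have key : ∀ a b, (J a *ᵥ z) ⬝ᵥ (J b *ᵥ z) = -(z ⬝ᵥ ((J b * J a) *ᵥ z)) := fun a b => by
    rw [dotProduct_mulVec, ← mulVec_transpose, hJ.1 b, neg_mulVec, neg_dotProduct,
      dotProduct_comm, mulVec_mulVec]
  have hsum := congrArg (fun A => z ⬝ᵥ (A *ᵥ z)) (hJ.2 a b)
  simp only [add_mulVec, dotProduct_add, smul_mulVec, one_mulVec, dotProduct_smul,
    smul_eq_mul] at hsum
  have hsymm : (J a *ᵥ z) ⬝ᵥ (J b *ᵥ z) = -(z ⬝ᵥ ((J a * J b) *ᵥ z)) := by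
    rw [dotProduct_comm, key b a]
  split_ifs at hsum ⊢ <;> linarith [key a b]

theorem dotProduct_sum_smul_mulVec (hJ : HType J) (σ : Fin k → ℝ) (z : Fin m → ℝ) :
    z ⬝ᵥ ∑ ℓ, σ ℓ • (J ℓ *ᵥ z) = 0 := by
  simp [dotProduct_sum, dotProduct_smul,
    dotProduct_mulVec_self_eq_zero_of_transpose_eq_neg (hJ.1 _)]

theorem sum_smul_mulVec_dotProduct_self (hJ : HType J) (σ : Fin k → ℝ) (z : Fin m → ℝ) :
    (∑ ℓ, σ ℓ • (J ℓ *ᵥ z)) ⬝ᵥ (∑ ℓ, σ ℓ • (J ℓ *ᵥ z)) = (σ ⬝ᵥ σ) * (z ⬝ᵥ z) := by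
  simp only [sum_dotProduct, dotProduct_sum, smul_dotProduct, dotProduct_smul, smul_eq_mul,
    hJ.mulVec_dotProduct_mulVec, mul_ite, mul_zero, Finset.sum_ite_eq', Finset.mem_univ, if_true]
  simp only [dotProduct, Finset.sum_mul, mul_assoc]

end HType

theorem EuclideanSpace.ofLp_dotProduct_self (y : EuclideanSpace ℝ (Fin m)) :
    y.ofLp ⬝ᵥ y.ofLp = ‖y‖ ^ 2 := by
  rw [EuclideanSpace.norm_sq_eq]
  simp [dotProduct, sq]

section HorizontalCalculus

variable {J : Fin k → Matrix (Fin m) (Fin m) ℝ} {f g : Pt m k → ℝ} {x : Pt m k} (i : Fin m)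

/-- The horizontal vector field `X_i` at `x`. -/
def hVec (J : Fin k → Matrix (Fin m) (Fin m) ℝ) (i : Fin m) (x : Pt m k) : Pt m k :=
  (EuclideanSpace.single i 1, (1 / 2 : ℝ) • ∑ ℓ, (J ℓ *ᵥ x.1) i • EuclideanSpace.single ℓ 1)

theorem XD_eq_fderiv_apply : XD J f i x = fderiv ℝ f x (hVec J i x) := by
  have hv : hVec J i x = (EuclideanSpace.single i 1, 0) + ∑ ℓ, ((1 / 2 : ℝ) * (J ℓ *ᵥ x.1) i) •
      ((0 : EuclideanSpace ℝ (Fin m)), EuclideanSpace.single ℓ (1 : ℝ)) := by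
    ext <;> simp [hVec, Prod.fst_sum, Prod.snd_sum, Finset.smul_sum, smul_smul]
  rw [hv, map_add, map_sum, XD, Finset.mul_sum]
  simp only [map_smul, smul_eq_mul]
  congr 1
  exact Finset.sum_congr rfl fun ℓ _ => by simp only [mulVec, dotProduct]; ring

theorem HasFDerivAt.XD_eq {f' : Pt m k →L[ℝ] ℝ} (h : HasFDerivAt f f' x) :
    XD J f i x = f' (hVec J i x) := by
  rw [XD_eq_fderiv_apply, h.fderiv]

theorem XD_congr (h : f =ᶠ[𝓝 x] g) : XD J f i x = XD J g i x := by
  rw [XD_eq_fderiv_apply, XD_eq_fderiv_apply, h.fderiv_eq]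

theorem XD_const_mul (c : ℝ) : XD J (fun y => c * f y) i x = c * XD J f i x := by
  rw [XD_eq_fderiv_apply, XD_eq_fderiv_apply, show (fun y => c * f y) = c • f from rfl,
    fderiv_const_smul_field]
  rfl

theorem XD_add (hf : DifferentiableAt ℝ f x) (hg : DifferentiableAt ℝ g x) :
    XD J (fun y => f y + g y) i x = XD J f i x + XD J g i x := by
  rw [(hf.hasFDerivAt.fun_add hg.hasFDerivAt).XD_eq i, hf.hasFDerivAt.XD_eq i,
    hg.hasFDerivAt.XD_eq i]
  rfl

theorem XD_mul (hf : DifferentiableAt ℝ f x) (hg : DifferentiableAt ℝ g x) :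
    XD J (fun y => f y * g y) i x = f x * XD J g i x + g x * XD J f i x := by
  rw [(hf.hasFDerivAt.fun_mul hg.hasFDerivAt).XD_eq i, hf.hasFDerivAt.XD_eq i,
    hg.hasFDerivAt.XD_eq i]
  simp

theorem XD_sum {ι : Type*} (s : Finset ι) {F : ι → Pt m k → ℝ}
    (hF : ∀ a ∈ s, DifferentiableAt ℝ (F a) x) :
    XD J (fun y => ∑ a ∈ s, F a y) i x = ∑ a ∈ s, XD J (F a) i x := by
  rw [(HasFDerivAt.fun_sum fun a ha => (hF a ha).hasFDerivAt).XD_eq i]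
  simp only [_root_.sum_apply]
  exact Finset.sum_congr rfl fun a ha => ((hF a ha).hasFDerivAt.XD_eq i).symm

theorem HasDerivAt.XD_comp {φ : ℝ → ℝ} {φ' : ℝ} (hφ : HasDerivAt φ φ' (f x))
    (hf : DifferentiableAt ℝ f x) : XD J (fun y => φ (f y)) i x = φ' * XD J f i x := by
  refine ((hφ.comp_hasFDerivAt x hf.hasFDerivAt).XD_eq i).trans ?_
  rw [hf.hasFDerivAt.XD_eq i]
  simp

theorem XD_fst_apply (j : Fin m) : XD J (fun y => y.1 j) i x = if i = j then 1 else 0 := by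
  refine (((EuclideanSpace.proj j).comp (ContinuousLinearMap.fst ℝ _ _)).hasFDerivAt.XD_eq
    i).trans ?_
  simp [hVec, eq_comm]

theorem XD_snd_apply (ℓ : Fin k) : XD J (fun y => y.2 ℓ) i x = (J ℓ *ᵥ x.1) i / 2 := by
  refine (((EuclideanSpace.proj ℓ).comp (ContinuousLinearMap.snd ℝ _ _)).hasFDerivAt.XD_eq
    i).trans ?_
  simp [hVec, div_eq_inv_mul]

theorem differentiable_mulVec_fst_apply (A : Matrix (Fin m) (Fin m) ℝ) (j : Fin m) :
    Differentiable ℝ (fun y : Pt m k => (A *ᵥ y.1) j) := by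
  simp only [mulVec, dotProduct]
  fun_prop

theorem XD_mulVec_fst_apply (A : Matrix (Fin m) (Fin m) ℝ) (j : Fin m) :
    XD J (fun y => (A *ᵥ y.1) j) i x = A j i := by
  change XD J (fun y => ∑ l, A j l * y.1 l) i x = _
  rw [XD_sum i _ fun l _ => by fun_prop]
  simp [XD_const_mul, XD_fst_apply]

theorem XD_norm_fst_sq : XD J (fun y => ‖y.1‖ ^ 2) i x = 2 * x.1 i := by
  rw [(hasFDerivAt_fst.norm_sq).XD_eq i]
  simp [hVec, EuclideanSpace.inner_single_right]

theorem XD_norm_snd_sq : XD J (fun y => ‖y.2‖ ^ 2) i x = ∑ ℓ, x.2 ℓ * (J ℓ *ᵥ x.1) i := by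
  rw [(hasFDerivAt_snd.norm_sq).XD_eq i]
  simp [hVec, EuclideanSpace.inner_single_right, Finset.mul_sum, mul_comm]

theorem XD_norm_fst_rpow (hx : x.1 ≠ 0) (r : ℝ) :
    XD J (fun y => ‖y.1‖ ^ r) i x = r * ‖x.1‖ ^ (r - 2) * x.1 i := by
  have hpos : 0 < ‖x.1‖ ^ 2 := by positivity
  have hsq : ∀ (a : EuclideanSpace ℝ (Fin m)) (s : ℝ), ‖a‖ ^ s = (‖a‖ ^ 2) ^ (s / 2) :=
    fun a s => by
      rw [← Real.rpow_natCast, ← Real.rpow_mul (norm_nonneg a)]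
      ring_nf
  simp only [hsq _ r]
  rw [(Real.hasDerivAt_rpow_const (Or.inl hpos.ne')).XD_comp i (differentiableAt_fst.norm_sq ℝ),
    XD_norm_fst_sq, hsq _ (r - 2)]
  ring_nf

end HorizontalCalculus

section Gauge

variable {J : Fin k → Matrix (Fin m) (Fin m) ℝ} {x : Pt m k} (i : Fin m)

def gaugeQuartic (x : Pt m k) : ℝ := ‖x.1‖ ^ 4 + 16 * ‖x.2‖ ^ 2

/-- The `i`-th coordinate of `|z|² z + 4 J_σ z`, where `J_σ = Σ_ℓ σ_ℓ J_ℓ`. -/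
def gaugeW (J : Fin k → Matrix (Fin m) (Fin m) ℝ) (i : Fin m) (x : Pt m k) : ℝ :=
  ‖x.1‖ ^ 2 * x.1 i + 4 * ∑ ℓ, x.2 ℓ * (J ℓ *ᵥ x.1) i

theorem gaugeQuartic_eq_sq_add :
    (gaugeQuartic : Pt m k → ℝ) = fun y => (‖y.1‖ ^ 2) ^ 2 + 16 * ‖y.2‖ ^ 2 := by
  funext y
  rw [gaugeQuartic]
  ring

theorem differentiable_gaugeQuartic : Differentiable ℝ (gaugeQuartic : Pt m k → ℝ) := by
  rw [gaugeQuartic_eq_sq_add]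
  exact fun x =>
    ((differentiableAt_fst.norm_sq ℝ).pow 2).add ((differentiableAt_snd.norm_sq ℝ).const_mul _)

theorem gaugeQuartic_pos (hx : x ≠ 0) : 0 < gaugeQuartic x := by
  rcases eq_or_ne x.1 0 with h1 | h1
  · have h2 : x.2 ≠ 0 := fun h2 => hx (Prod.ext h1 h2)
    unfold gaugeQuartic
    positivity
  · unfold gaugeQuartic
    positivity

theorem gaugeN_nonneg (x : Pt m k) : 0 ≤ gaugeN x := by
  unfold gaugeN
  positivity

theorem gaugeN_zero : gaugeN (0 : Pt m k) = 0 := by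
  simp [gaugeN]

theorem gaugeN_pos (hx : x ≠ 0) : 0 < gaugeN x :=
  Real.rpow_pos_of_pos (gaugeQuartic_pos hx) _

theorem gaugeN_pow_four (x : Pt m k) : gaugeN x ^ 4 = gaugeQuartic x := by
  rw [gaugeN, ← Real.rpow_natCast, ← Real.rpow_mul (by positivity)]
  norm_num [gaugeQuartic]

theorem differentiableAt_gaugeN (hx : x ≠ 0) : DifferentiableAt ℝ gaugeN x :=
  (differentiable_gaugeQuartic x).rpow_const (Or.inl (gaugeQuartic_pos hx).ne')

theorem differentiable_gaugeW : Differentiable ℝ (gaugeW J i) := fun x =>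
  ((differentiableAt_fst.norm_sq ℝ).fun_mul (by fun_prop)).add (.const_mul
    (.fun_sum fun ℓ _ => .fun_mul (by fun_prop) (differentiable_mulVec_fst_apply _ _ x)) _)

theorem XD_gaugeQuartic : XD J gaugeQuartic i x = 4 * gaugeW J i x := by
  rw [gaugeQuartic_eq_sq_add, XD_add i (f := fun y => (‖y.1‖ ^ 2) ^ 2)
      ((differentiableAt_fst.norm_sq ℝ).pow 2) ((differentiableAt_snd.norm_sq ℝ).const_mul _),
    XD_const_mul, (hasDerivAt_pow 2 _).XD_comp i (differentiableAt_fst.norm_sq ℝ),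
    XD_norm_fst_sq, XD_norm_snd_sq, gaugeW]
  ring

theorem XD_gaugeN (hx : x ≠ 0) : XD J gaugeN i x = gaugeW J i x / gaugeN x ^ 3 := by
  have hu := gaugeQuartic_pos hx
  change XD J (fun y => gaugeQuartic y ^ (1 / 4 : ℝ)) i x = _
  rw [(Real.hasDerivAt_rpow_const (Or.inl hu.ne')).XD_comp i (differentiable_gaugeQuartic x),
    XD_gaugeQuartic, Real.rpow_sub_one hu.ne',
    show gaugeQuartic x ^ (1 / 4 : ℝ) = gaugeN x from rfl, ← gaugeN_pow_four x]
  field_simp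

theorem gaugeW_eq_add_sum_smul_mulVec (x : Pt m k) :
    gaugeW J i x = ‖x.1‖ ^ 2 * x.1 i + 4 * (∑ ℓ, x.2 ℓ • (J ℓ *ᵥ x.1)) i := by
  simp [gaugeW, Finset.sum_apply]

theorem HType.sum_fst_mul_gaugeW (hJ : HType J) (x : Pt m k) :
    ∑ i, x.1 i * gaugeW J i x = ‖x.1‖ ^ 4 := by
  have hexp : ∑ i, x.1 i * gaugeW J i x = ‖x.1‖ ^ 2 * (x.1.ofLp ⬝ᵥ x.1.ofLp)
      + 4 * (x.1.ofLp ⬝ᵥ ∑ ℓ, x.2 ℓ • (J ℓ *ᵥ x.1)) := by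
    simp only [gaugeW_eq_add_sum_smul_mulVec, dotProduct, Finset.mul_sum,
      ← Finset.sum_add_distrib]
    exact Finset.sum_congr rfl fun i _ => by ring
  rw [hexp, hJ.dotProduct_sum_smul_mulVec, EuclideanSpace.ofLp_dotProduct_self]
  ring

theorem HType.sum_gaugeW_sq (hJ : HType J) (x : Pt m k) :
    ∑ i, gaugeW J i x ^ 2 = ‖x.1‖ ^ 2 * gaugeN x ^ 4 := by
  set v := ∑ ℓ, x.2 ℓ • (J ℓ *ᵥ x.1)
  have hexp : ∑ i, gaugeW J i x ^ 2 = ‖x.1‖ ^ 4 * (x.1.ofLp ⬝ᵥ x.1.ofLp)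
      + 8 * ‖x.1‖ ^ 2 * (x.1.ofLp ⬝ᵥ v) + 16 * (v ⬝ᵥ v) := by
    simp only [gaugeW_eq_add_sum_smul_mulVec, dotProduct, Finset.mul_sum,
      ← Finset.sum_add_distrib]
    exact Finset.sum_congr rfl fun i _ => by ring
  rw [hexp, hJ.dotProduct_sum_smul_mulVec, hJ.sum_smul_mulVec_dotProduct_self,
    EuclideanSpace.ofLp_dotProduct_self, EuclideanSpace.ofLp_dotProduct_self, gaugeN_pow_four,
    gaugeQuartic]
  ring

theorem XD_gaugeW_self (x : Pt m k) : XD J (gaugeW J i) i x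
    = ‖x.1‖ ^ 2 + 2 * x.1 i ^ 2 + 2 * ∑ ℓ, (J ℓ *ᵥ x.1) i ^ 2 + 4 * ∑ ℓ, x.2 ℓ * J ℓ i i := by
  have hterm : ∀ ℓ, XD J (fun y : Pt m k => y.2 ℓ * (J ℓ *ᵥ y.1) i) i x
      = x.2 ℓ * J ℓ i i + (J ℓ *ᵥ x.1) i ^ 2 / 2 := fun ℓ => by
    rw [XD_mul i (by fun_prop) (differentiable_mulVec_fst_apply _ _ x), XD_mulVec_fst_apply,
      XD_snd_apply]
    ring
  change XD J (fun y => ‖y.1‖ ^ 2 * y.1 i + 4 * ∑ ℓ, y.2 ℓ * (J ℓ *ᵥ y.1) i) i x = _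
  rw [XD_add i ((differentiableAt_fst.norm_sq ℝ).fun_mul (by fun_prop)) (.const_mul
      (.fun_sum fun ℓ _ => .fun_mul (by fun_prop) (differentiable_mulVec_fst_apply _ _ x)) _),
    XD_mul i (differentiableAt_fst.norm_sq ℝ) (by fun_prop), XD_const_mul,
    XD_sum i _ fun ℓ _ => .fun_mul (by fun_prop) (differentiable_mulVec_fst_apply _ _ x),
    XD_norm_fst_sq, XD_fst_apply]
  simp only [hterm, Finset.sum_add_distrib, ← Finset.sum_div, if_true]
  ring

theorem HType.sum_XD_gaugeW_self (hJ : HType J) (x : Pt m k) :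
    ∑ i, XD J (gaugeW J i) i x = (m + 2 * k + 2) * ‖x.1‖ ^ 2 := by
  have hz : ∑ i, x.1 i ^ 2 = ‖x.1‖ ^ 2 := by
    rw [← EuclideanSpace.ofLp_dotProduct_self]
    simp [dotProduct, sq]
  have hJz : ∑ i, ∑ ℓ, (J ℓ *ᵥ x.1) i ^ 2 = k * ‖x.1‖ ^ 2 := by
    rw [Finset.sum_comm]
    simp only [sq]
    change ∑ ℓ, (J ℓ *ᵥ x.1) ⬝ᵥ (J ℓ *ᵥ x.1) = _
    simp only [hJ.mulVec_dotProduct_mulVec, if_true, EuclideanSpace.ofLp_dotProduct_self,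
      Finset.sum_const, Finset.card_univ, Fintype.card_fin, nsmul_eq_mul]
    ring
  have htr : ∑ i, ∑ ℓ, x.2 ℓ * J ℓ i i = 0 := by
    rw [Finset.sum_comm]
    refine Finset.sum_eq_zero fun ℓ _ => ?_
    rw [← Finset.mul_sum, show ∑ i, J ℓ i i = (J ℓ).trace from rfl,
      trace_eq_zero_of_transpose_eq_neg (hJ.1 ℓ), mul_zero]
  simp only [XD_gaugeW_self, Finset.sum_add_distrib, ← Finset.mul_sum, hz, hJz, htr,
    Finset.sum_const, Finset.card_univ, Fintype.card_fin, nsmul_eq_mul, mul_zero, add_zero]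
  ring

theorem HType.sum_XD_norm_rpow_mul_gaugeW (hJ : HType J) (hx : x.1 ≠ 0) (r : ℝ) :
    ∑ i, XD J (fun y => ‖y.1‖ ^ r * gaugeW J i y) i x
      = (m + 2 * k + 2 + r) * ‖x.1‖ ^ (r + 2) := by
  have hz : ‖x.1‖ ≠ 0 := norm_ne_zero_iff.2 hx
  have hd : DifferentiableAt ℝ (fun y : Pt m k => ‖y.1‖ ^ r) x :=
    (differentiableAt_fst.norm ℝ hx).rpow_const (Or.inl hz)
  simp only [XD_mul _ hd (differentiable_gaugeW _ x), XD_norm_fst_rpow _ hx,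
    Finset.sum_add_distrib, ← Finset.mul_sum, hJ.sum_XD_gaugeW_self]
  have hw : ∑ i, gaugeW J i x * (r * ‖x.1‖ ^ (r - 2) * x.1 i)
      = r * ‖x.1‖ ^ (r - 2) * ‖x.1‖ ^ 4 := by
    rw [← hJ.sum_fst_mul_gaugeW, Finset.mul_sum]
    exact Finset.sum_congr rfl fun i _ => by ring
  rw [hw, show r + 2 = r + (2 : ℕ) by norm_num, show r - 2 = r - (2 : ℕ) by norm_num,
    Real.rpow_add_natCast hz, Real.rpow_sub_natCast hz]
  field_simp

end Gauge

section GaugeProfile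

variable {J : Fin k → Matrix (Fin m) (Fin m) ℝ} {f : Pt m k → ℝ} {x : Pt m k}

theorem hGradSq_rpow_half (r : ℝ) : hGradSq J f x ^ (r / 2) = hGradNorm J f x ^ r := by
  have h : 0 ≤ hGradSq J f x := Finset.sum_nonneg fun i _ => sq_nonneg _
  rw [hGradNorm, Real.sqrt_eq_rpow, ← Real.rpow_mul h]
  congr 1
  ring

theorem HasDerivAt.hGradNorm_comp {φ : ℝ → ℝ} {φ' : ℝ} (hφ : HasDerivAt φ φ' (f x))
    (hf : DifferentiableAt ℝ f x) :
    hGradNorm J (fun y => φ (f y)) x = |φ'| * hGradNorm J f x := by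
  simp only [hGradNorm, hGradSq, hφ.XD_comp _ hf, mul_pow, ← Finset.mul_sum]
  rw [Real.sqrt_mul (sq_nonneg _), Real.sqrt_sq_eq_abs]

theorem HType.hGradNorm_gaugeN (hJ : HType J) (hx : x ≠ 0) :
    hGradNorm J gaugeN x = ‖x.1‖ / gaugeN x := by
  have hN := gaugeN_pos hx
  have h : hGradSq J gaugeN x = (‖x.1‖ / gaugeN x) ^ 2 := by
    simp only [hGradSq, XD_gaugeN _ hx, div_pow, ← Finset.sum_div, hJ.sum_gaugeW_sq]
    field_simp
  rw [hGradNorm, h, Real.sqrt_sq (by positivity)]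

variable (c C β : ℝ)

theorem hasDerivAt_const_sub_mul_rpow {t : ℝ} (ht : 0 < t) :
    HasDerivAt (fun s => c - C * s ^ β) (-(C * β) * t ^ (β - 1)) t :=
  (((Real.hasDerivAt_rpow_const (Or.inl ht.ne')).const_mul C).const_sub c).congr_deriv (by ring)

theorem XD_const_sub_mul_gaugeN_rpow (i : Fin m) (hx : x ≠ 0) :
    XD J (fun y => c - C * gaugeN y ^ β) i x = -(C * β) * gaugeN x ^ (β - 4) * gaugeW J i x := by
  have hN := gaugeN_pos hx
  rw [(hasDerivAt_const_sub_mul_rpow c C β hN).XD_comp i (differentiableAt_gaugeN hx),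
    XD_gaugeN i hx, show β - 4 = β - 1 - (3 : ℕ) by push_cast; ring,
    Real.rpow_sub_natCast hN.ne']
  ring

theorem HType.hGradNorm_const_sub_mul_gaugeN_rpow (hJ : HType J) (hx : x ≠ 0) :
    hGradNorm J (fun y => c - C * gaugeN y ^ β) x = |C * β| * gaugeN x ^ (β - 2) * ‖x.1‖ := by
  have hN := gaugeN_pos hx
  rw [(hasDerivAt_const_sub_mul_rpow c C β hN).hGradNorm_comp (differentiableAt_gaugeN hx),
    hJ.hGradNorm_gaugeN hx, abs_mul, abs_neg, abs_of_pos (Real.rpow_pos_of_pos hN _),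
    show β - 1 = β - 2 + (1 : ℕ) by push_cast; ring, Real.rpow_add_natCast hN.ne']
  field_simp

theorem HType.hGradSq_rpow_mul_XD_const_sub_mul_gaugeN_rpow (hJ : HType J) {p : ℝ}
    (hCβ : 0 < C * β) (hβ : (β - 2) * (p - 1) = 2) (i : Fin m) (hx : x ≠ 0) :
    hGradSq J (fun y => c - C * gaugeN y ^ β) x ^ ((p - 2) / 2)
        * XD J (fun y => c - C * gaugeN y ^ β) i x
      = -(C * β) ^ (p - 1) * (‖x.1‖ ^ (p - 2) * gaugeW J i x) := by
  have hN := gaugeN_pos hx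
  rw [hGradSq_rpow_half, hJ.hGradNorm_const_sub_mul_gaugeN_rpow c C β hx, abs_of_pos hCβ,
    XD_const_sub_mul_gaugeN_rpow c C β i hx, Real.mul_rpow (by positivity) (norm_nonneg _),
    Real.mul_rpow hCβ.le (by positivity), ← Real.rpow_mul hN.le]
  have hN0 : gaugeN x ^ ((β - 2) * (p - 2)) * gaugeN x ^ (β - 4) = 1 := by
    rw [← Real.rpow_add hN, show (β - 2) * (p - 2) + (β - 4) = 0 by linear_combination hβ,
      Real.rpow_zero]
  have hCβp : (C * β) ^ (p - 2) * (C * β) = (C * β) ^ (p - 1) := by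
    rw [← Real.rpow_add_one hCβ.ne']
    ring_nf
  calc _ = -((C * β) ^ (p - 2) * (C * β))
        * (gaugeN x ^ ((β - 2) * (p - 2)) * gaugeN x ^ (β - 4))
        * (‖x.1‖ ^ (p - 2) * gaugeW J i x) := by ring
    _ = _ := by rw [hCβp, hN0]; ring

theorem HType.hPLap_const_sub_mul_gaugeN_rpow (hJ : HType J) {p : ℝ} (hCβ : 0 < C * β)
    (hβ : (β - 2) * (p - 1) = 2) (hx : x.1 ≠ 0) :
    hPLap J p (fun y => c - C * gaugeN y ^ β) x
      = -((C * β) ^ (p - 1) * (m + 2 * k + p)) * ‖x.1‖ ^ p := by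
  have hflux : ∀ i, (fun y => hGradSq J (fun y => c - C * gaugeN y ^ β) y ^ ((p - 2) / 2)
      * XD J (fun y => c - C * gaugeN y ^ β) i y)
        =ᶠ[𝓝 x] fun y => -(C * β) ^ (p - 1) * (‖y.1‖ ^ (p - 2) * gaugeW J i y) := fun i =>
    eventuallyEq_of_mem ((isOpen_ne_fun continuous_fst continuous_const).mem_nhds hx) fun y hy =>
      hJ.hGradSq_rpow_mul_XD_const_sub_mul_gaugeN_rpow c C β hCβ hβ i
        fun h => hy (congrArg Prod.fst h)
  simp only [hPLap, XD_congr _ (hflux _), XD_const_mul, ← Finset.mul_sum,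
    hJ.sum_XD_norm_rpow_mul_gaugeW hx, show p - 2 + 2 = p by ring]
  ring

end GaugeProfile

theorem dirichlet_solution_on_gauge_ball_general
    (J : Fin k → Matrix (Fin m) (Fin m) ℝ) (hJ : HType J)
    (p R : ℝ) (hp : 1 < p) (hR : 0 < R)
    (f : Pt m k → ℝ)
    (hf : ∀ x : Pt m k, f x =
      ((p - 1) / (2 * p * (((m : ℝ) + 2 * k + p) ^ (1 / (p - 1))))) *
        (R ^ (2 * p / (p - 1)) - gaugeN x ^ (2 * p / (p - 1)))) :
    (∀ x : Pt m k, x.1 ≠ 0 → hPLap J p f x = -(‖x.1‖ ^ p)) ∧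
    (∀ x : Pt m k, gaugeN x = R → f x = 0) ∧
    (∀ x : Pt m k, gaugeN x < R → 0 < f x) ∧
    (∀ x : Pt m k, gaugeN x = R →
      hGradNorm J f x = ((R ^ 2 / ((m : ℝ) + 2 * k + p)) ^ (1 / (p - 1))) * ‖x.1‖) := by
  have hp1 : 0 < p - 1 := by linarith
  have hQ : 0 < (m : ℝ) + 2 * k + p := by positivity
  set T := ((m : ℝ) + 2 * k + p) ^ (1 / (p - 1)) with hT
  set C := (p - 1) / (2 * p * T) with hC
  set β := 2 * p / (p - 1) with hβ
  have hTpos : 0 < T := by positivity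
  have hCβ : C * β = T⁻¹ := by rw [hC, hβ]; field_simp
  have hβ2 : (β - 2) * (p - 1) = 2 := by rw [hβ]; field_simp; ring
  have hCβp : (C * β) ^ (p - 1) = ((m : ℝ) + 2 * k + p)⁻¹ := by
    rw [hCβ, Real.inv_rpow hTpos.le, hT, ← Real.rpow_mul hQ.le, one_div_mul_cancel hp1.ne',
      Real.rpow_one]
  have hf' : f = fun y => C * R ^ β - C * gaugeN y ^ β :=
    funext fun y => (hf y).trans (mul_sub _ _ _)
  refine ⟨fun x hx => ?_, fun x hx => ?_, fun x hx => ?_, fun x hx => ?_⟩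
  · rw [hf', hJ.hPLap_const_sub_mul_gaugeN_rpow _ _ _ (hCβ ▸ inv_pos.2 hTpos) hβ2 hx, hCβp]
    field_simp
  · rw [hf x, hx, sub_self, mul_zero]
  · rw [hf x]
    exact mul_pos (by positivity)
      (sub_pos.2 (Real.rpow_lt_rpow (gaugeN_nonneg x) hx (by positivity)))
  · have hx0 : x ≠ 0 := fun h => hR.ne' (by rw [← hx, h, gaugeN_zero])
    have hRβ : R ^ (β - 2) = (R ^ 2) ^ (1 / (p - 1)) := by
      rw [← Real.rpow_natCast, ← Real.rpow_mul hR.le, hβ]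
      congr 1
      field_simp
      ring
    rw [hf', hJ.hGradNorm_const_sub_mul_gaugeN_rpow _ _ _ hx0, hCβ, hx,
      abs_of_pos (inv_pos.2 hTpos), hRβ, Real.div_rpow (by positivity) hQ.le, ← hT]
    ring

/-- the explicit function
f = ((p−1)/(2p(Q+p)^{1/(p−1)}))·(R^{2p/(p−1)} − N^{2p/(p−1)}) on ℝ^m × ℝ^k satisfies
(i) Δ_{H,p} f = −|z|^p away from {z = 0}; (ii) f = 0 on {N = R} and f > 0 on {N < R};
(iii) |∇_H f| = c|z| on {N = R} with c = (R²/(Q+p))^{1/(p−1)}, where Q = m+2k. -/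
theorem dirichlet_solution_on_gauge_ball
    (hm : 1 ≤ m) (hk : 1 ≤ k)
    (J : Fin k → Matrix (Fin m) (Fin m) ℝ) (hJ : HType J)
    (p R : ℝ) (hp : 1 < p) (hR : 0 < R)
    (f : Pt m k → ℝ)
    (hf : ∀ x : Pt m k, f x =
      ((p - 1) / (2 * p * (((m : ℝ) + 2 * k + p) ^ (1 / (p - 1))))) *
        (R ^ (2 * p / (p - 1)) - gaugeN x ^ (2 * p / (p - 1)))) :
    (∀ x : Pt m k, x.1 ≠ 0 → hPLap J p f x = -(‖x.1‖ ^ p)) ∧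
    (∀ x : Pt m k, gaugeN x = R → f x = 0) ∧
    (∀ x : Pt m k, gaugeN x < R → 0 < f x) ∧
    (∀ x : Pt m k, gaugeN x = R →
      hGradNorm J f x = ((R ^ 2 / ((m : ℝ) + 2 * k + p)) ^ (1 / (p - 1))) * ‖x.1‖) :=
  dirichlet_solution_on_gauge_ball_general J hJ p R hp hR f hf

end
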